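/- Let X_1,…,X_n be random variables taking values in finite nonempty sets A_1,…,A_n with strictly positive joint probability mass function p on A_1 × ⋯ × A_n. For each k ∈ {1,…,n} let S(k) and B(k) be disjoint subsets of {1,…,k−1} with pa(k) = S(k) ∪ B(k), and assume p factorizes along the DAG: p(x) = ∏_{k=1}^n p(x_k | x_{pa(k)}) for all x. Define q(x) := ∏_{k=1}^n p(x_k | x_{S(k)}). Then the relative entropy of p with respect to q satisfies ∑_x p(x) log( p(x) / q(x) ) = ∑_{k=1}^n I( X_k ; (X_u : u ∈ B(k)) | (X_u : u ∈ S(k)) ), where I(X;Y|Z) denotes conditional mutual information. -/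

import Mathlib

open Finset

/-- The marginal pmf of the coordinates in `S`: `marg p S x` is the probability
(under the joint pmf `p`) that the coordinates in `S` take the values `x i`, `i ∈ S`. -/
def marg {n : ℕ} {A : Fin n → Type*} [∀ i, Fintype (A i)] [∀ i, DecidableEq (A i)]
    (p : (∀ i, A i) → ℝ) (S : Finset (Fin n)) (x : ∀ i, A i) : ℝ :=
  ∑ y : ∀ i, A i, if ∀ i ∈ S, y i = x i then p y else 0

/-!
Pointwise, `p x / q x` is the product over `k` of
`p(x_k | x_{S k ∪ B k}) / p(x_k | x_{S k})`, which equals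
`p(x_k, x_{B k} | x_{S k}) / (p(x_k | x_{S k}) p(x_{B k} | x_{S k}))`.
Taking logarithms turns the product into a sum, and averaging against `p` turns the
`k`-th summand into `I(X_k ; X_{B k} | X_{S k})`.
-/

lemma marg_pos {n : ℕ} {A : Fin n → Type*} [∀ i, Fintype (A i)] [∀ i, DecidableEq (A i)]
    {p : (∀ i, A i) → ℝ} (hp : ∀ y, 0 ≤ p y) {x : ∀ i, A i} (hx : 0 < p x)
    (S : Finset (Fin n)) : 0 < marg p S x :=
  sum_pos' (fun y _ => by split_ifs <;> simp [hp y]) ⟨x, mem_univ x, by simpa using hx⟩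

theorem relativeEntropy_eq_sum_condMutualInfo_general
    {n : ℕ} {A : Fin n → Type*} [∀ i, Fintype (A i)] [∀ i, DecidableEq (A i)]
    (p : (∀ i, A i) → ℝ) (hpos : ∀ x, 0 < p x)
    (S B : Fin n → Finset (Fin n))
    (hfact : ∀ x, p x =
      ∏ k, marg p (insert k (S k ∪ B k)) x / marg p (S k ∪ B k) x)
    (q : (∀ i, A i) → ℝ)
    (hq : ∀ x, q x = ∏ k, marg p (insert k (S k)) x / marg p (S k) x) :
    ∑ x, p x * Real.log (p x / q x)
      = ∑ k, ∑ x, p x * Real.log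
          ((marg p (insert k (S k ∪ B k)) x * marg p (S k) x)
            / (marg p (insert k (S k)) x * marg p (S k ∪ B k) x)) := by
  have hmarg (T : Finset (Fin n)) (x : ∀ i, A i) : 0 < marg p T x :=
    marg_pos (fun y => (hpos y).le) (hpos x) T
  have hlog (x : ∀ i, A i) : Real.log (p x / q x) = ∑ k, Real.log
      ((marg p (insert k (S k ∪ B k)) x * marg p (S k) x)
        / (marg p (insert k (S k)) x * marg p (S k ∪ B k) x)) := by
    rw [hfact x, hq x, ← prod_div_distrib, Real.log_prod]
    · simp only [div_div_div_eq, mul_comm (marg p (S _ ∪ B _) x)]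
    · exact fun k _ => (div_pos (div_pos (hmarg _ x) (hmarg _ x))
        (div_pos (hmarg _ x) (hmarg _ x))).ne'
  simp only [hlog, mul_sum]
  exact sum_comm

/-- equation (7) of the paper.
Let `X_1, …, X_n` have strictly positive joint pmf `p` on a finite product.  For
each `k` let `S k` and `B k` be disjoint subsets of `{1, …, k-1}` with
`pa k = S k ∪ B k`, and assume `p` factorizes along the DAG:
`p x = ∏ k, p(x_k | x_{pa k})`.  With `q x := ∏ k, p(x_k | x_{S k})`, the relative
entropy of `p` with respect to `q` is
`∑ x, p x * log (p x / q x) = ∑ k, I(X_k ; X_{B k} | X_{S k})`,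
where the conditional mutual information is written via marginal pmfs as
`I(X;Y|Z) = ∑ p(x,y,z) log (p(x,y,z) p(z) / (p(x,z) p(y,z)))`. -/
theorem relativeEntropy_eq_sum_condMutualInfo
    {n : ℕ} {A : Fin n → Type*} [∀ i, Fintype (A i)] [∀ i, DecidableEq (A i)]
    [∀ i, Nonempty (A i)]
    (p : (∀ i, A i) → ℝ) (hpos : ∀ x, 0 < p x) (hsum : ∑ x, p x = 1)
    (S B : Fin n → Finset (Fin n))
    (hS : ∀ k, ∀ u ∈ S k, u < k) (hB : ∀ k, ∀ u ∈ B k, u < k)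
    (hdisj : ∀ k, Disjoint (S k) (B k))
    (hfact : ∀ x, p x =
      ∏ k, marg p (insert k (S k ∪ B k)) x / marg p (S k ∪ B k) x)
    (q : (∀ i, A i) → ℝ)
    (hq : ∀ x, q x = ∏ k, marg p (insert k (S k)) x / marg p (S k) x) :
    ∑ x, p x * Real.log (p x / q x)
      = ∑ k, ∑ x, p x * Real.log
          ((marg p (insert k (S k ∪ B k)) x * marg p (S k) x)
            / (marg p (insert k (S k)) x * marg p (S k ∪ B k) x)) :=
  relativeEntropy_eq_sum_condMutualInfo_general p hpos S B hfact q hq
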